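/- Let M be a matroid with γ(M) = k + ε, where k is a nonnegative integer and 0 ≤ ε < 1; here γ(M) = max over nonempty X ⊆ E(M) of |X|/r(X). Then E(M) can be partitioned into k+1 independent sets, one of which has size at most ε·r(M). -/

import Mathlib

/-!
Edmonds' exchange-graph argument. For disjoint independent sets `J i`, let `x → y` whenever
`y ∈ J i` and `J i - y + x` is independent. An uncovered element from which some element addable
to a part is reachable can be absorbed by performing the swaps along a shortest such path. If no
uncovered element can be absorbed, the set `R` reachable from the uncovered set `L` is spanned by
every `J i ∩ R`, so `|R| ≥ t · r(R) + |L|` when there are `t` parts.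

With `t = k + 1` and `|X| ≤ (k + ε) r(X)` this forces `L = ∅`, giving a partition into `k + 1`
independent sets. Restarting from its last `k` parts and absorbing as long as possible, the
leftover `L` (a subset of the first part, hence independent) satisfies, with `t = k`,
`|L| ≤ |R| - k · r(R) ≤ ε · r(R) ≤ ε · r(M)`.
-/

open Set

variable {α : Type*}

/-- The rank of a set `X` in a matroid: size of a largest independent subset of `X`. -/
noncomputable def Matroid.rkSet (M : Matroid α) (X : Set α) : ℕ :=
  sSup {n | ∃ I, M.Indep I ∧ I ⊆ X ∧ I.ncard = n}

/-- The rank of a matroid. -/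
noncomputable def Matroid.rank (M : Matroid α) : ℕ := M.rkSet M.E

/-- A circuit is a minimal dependent set. -/
def Matroid.IsCircuitDef (M : Matroid α) (C : Set α) : Prop :=
  M.Dep C ∧ ∀ D, D ⊂ C → M.Indep D

/-- A paving matroid: every circuit has size at least the rank. -/
def Matroid.Paving (M : Matroid α) : Prop :=
  ∀ C, M.IsCircuitDef C → M.rank ≤ C.ncard

/-- Deletion of a set from a matroid. -/
noncomputable def Matroid.del (M : Matroid α) (D : Set α) : Matroid α :=
  M.restrict (M.E \ D)

/-- A cyclic ordering of a matroid, given as a list: every `M.rank`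
cyclically-consecutive entries form a base. -/
def Matroid.IsCyclicOrdering (M : Matroid α) (l : List α) : Prop :=
  l.Nodup ∧ {x | x ∈ l} = M.E ∧
    ∀ i : ℕ, M.IsBase {x | x ∈ (l.rotate i).take M.rank}


namespace Set

open Function

variable {ι : Type*}

lemma iUnion_update_union_self [DecidableEq ι] (J : ι → Set α) (j : ι) (S : Set α) :
    (⋃ i, Function.update J j S i) ∪ J j = S ∪ ⋃ i, J i := by
  ext z
  simp only [mem_union, mem_iUnion, Function.update_apply]
  constructor
  · rintro (⟨i, hi⟩ | hz)
    · split_ifs at hi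
      · exact .inl hi
      · exact .inr ⟨i, hi⟩
    · exact .inr ⟨j, hz⟩
  · rintro (hz | ⟨i, hi⟩)
    · exact .inl ⟨j, by simpa⟩
    · by_cases hij : i = j
      · exact .inr (hij ▸ hi)
      · exact .inl ⟨i, by simpa [hij]⟩

lemma ncard_eq_ncard_add_sum_ncard_inter [Fintype ι] {J : ι → Set α} {R S : Set α}
    (hR : R.Finite) (hJ : Pairwise (Disjoint on J)) (hSR : S ⊆ R) (hRS : R ⊆ S ∪ ⋃ i, J i)
    (hSJ : Disjoint S (⋃ i, J i)) : R.ncard = S.ncard + ∑ i, (J i ∩ R).ncard := by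
  have hsplit : R = S ∪ ⋃ i, J i ∩ R := by
    refine subset_antisymm (fun x hx => ?_)
      (union_subset hSR (iUnion_subset fun i => inter_subset_right))
    rcases hRS hx with hxS | hxJ
    · exact .inl hxS
    · obtain ⟨i, hxi⟩ := mem_iUnion.1 hxJ
      exact .inr (mem_iUnion_of_mem i ⟨hxi, hx⟩)
  have hfin (i : ι) : (J i ∩ R).Finite := hR.subset inter_subset_right
  rw [← finsum_eq_sum_of_fintype, ← ncard_iUnion_of_finite hfin
    fun i j hij => (hJ hij).mono inter_subset_left inter_subset_left]
  conv_lhs => rw [hsplit]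
  exact ncard_union_eq (hSJ.mono_right (iUnion_mono fun i => inter_subset_left))
    (hR.subset hSR) (hR.subset (iUnion_subset fun i => inter_subset_right))

end Set

namespace Matroid

open Function

variable {ι : Type*} {M : Matroid α} {J : ι → Set α} {I K L S T X Y : Set α} {e x y : α}

lemma rkSet_le_of_forall_indep {n : ℕ} (h : ∀ I, M.Indep I → I ⊆ X → I.ncard ≤ n) :
    M.rkSet X ≤ n :=
  csSup_le ⟨0, ∅, M.empty_indep, empty_subset X, ncard_empty α⟩ <| by
    rintro m ⟨I, hI, hIX, rfl⟩
    exact h I hI hIX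

section rkSet

variable [M.Finite]

lemma Indep.ncard_le_rkSet (hI : M.Indep I) (hIX : I ⊆ X) : I.ncard ≤ M.rkSet X := by
  refine le_csSup ⟨M.E.ncard, ?_⟩ ⟨I, hI, hIX, rfl⟩
  rintro n ⟨I', hI', -, rfl⟩
  exact ncard_le_ncard hI'.subset_ground M.ground_finite

lemma rkSet_mono (hXY : X ⊆ Y) : M.rkSet X ≤ M.rkSet Y :=
  rkSet_le_of_forall_indep fun _ hI hIX => hI.ncard_le_rkSet (hIX.trans hXY)

lemma Indep.rkSet_le_ncard_of_subset_closure (hK : M.Indep K) (hX : X ⊆ M.closure K) :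
    M.rkSet X ≤ K.ncard := by
  refine rkSet_le_of_forall_indep fun I hI hIX => ?_
  have h : I.encard ≤ K.encard := by
    calc I.encard = M.eRk I := hI.eRk_eq_encard.symm
      _ ≤ M.eRk (M.closure K) := M.eRk_mono (hIX.trans hX)
      _ = K.encard := by rw [eRk_closure_eq, hK.eRk_eq_encard]
  rwa [← (M.set_finite I hI.subset_ground).cast_ncard_eq,
    ← (M.set_finite K hK.subset_ground).cast_ncard_eq, Nat.cast_le] at h

end rkSet

lemma Indep.mem_closure_setOf_insert_indep (hI : M.Indep I) (hx : x ∈ M.closure I)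
    (hxI : x ∉ I) : x ∈ M.closure {y ∈ I | M.Indep (insert x (I \ {y}))} := by
  have hC := hI.fundCircuit_isCircuit hx hxI
  refine M.closure_subset_closure ?_
    (hC.mem_closure_sdiff_singleton_of_mem (M.mem_fundCircuit x I))
  rintro y ⟨hyC, hyx : y ≠ x⟩
  refine ⟨?_, ?_⟩
  · simpa [hyx] using M.fundCircuit_subset_insert x I hyC
  · rw [insert_sdiff_singleton_comm hyx.symm]
    exact (hI.mem_fundCircuit_iff hx hxI).1 hyC

lemma closure_insert_sdiff_singleton_eq (hyT : y ∈ T) (he : e ∈ M.closure T)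
    (he' : e ∉ M.closure (T \ {y})) : M.closure (insert e (T \ {y})) = M.closure T := by
  have hT : insert y (T \ {y}) = T := by simp [hyT]
  rw [closure_insert_congr ⟨hT ▸ he, he'⟩, hT]

lemma Indep.insert_indep_of_exchange (hxT : M.Indep (insert x T)) (hxT' : x ∉ T) (hxe : x ≠ e)
    (hyT : y ∈ T) (he : e ∈ M.closure T) (he' : e ∉ M.closure (T \ {y})) :
    M.Indep (insert x (insert e (T \ {y}))) := by
  have hT : M.Indep T := hxT.subset (subset_insert x T)
  have hS : M.Indep (insert e (T \ {y})) :=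
    (hT.subset sdiff_subset).insert_indep_iff.2 (.inl ⟨M.closure_subset_ground T he, he'⟩)
  refine (hS.insert_indep_iff_of_notMem ?_).2 ⟨hxT.subset_ground (mem_insert x T), ?_⟩
  · rintro (rfl | ⟨hxT'', -⟩)
    exacts [hxe rfl, hxT' hxT'']
  · rw [closure_insert_sdiff_singleton_eq hyT he he']
    exact ((hT.insert_indep_iff_of_notMem hxT').1 hxT).2

structure IsPacking (M : Matroid α) (J : ι → Set α) : Prop where
  indep : ∀ i, M.Indep (J i)
  pairwise_disjoint : Pairwise (Disjoint on J)

lemma IsPacking.subset_ground (hJ : M.IsPacking J) : ⋃ i, J i ⊆ M.E :=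
  iUnion_subset fun i => (hJ.indep i).subset_ground

lemma IsPacking.update [DecidableEq ι] (hJ : M.IsPacking J) {j : ι} (hS : M.Indep S)
    (hSJ : ∀ i ≠ j, Disjoint S (J i)) : M.IsPacking (Function.update J j S) := by
  refine ⟨fun i => ?_, fun a b hab => ?_⟩
  · rcases eq_or_ne i j with rfl | hij
    · simpa
    · simpa [hij] using hJ.indep i
  · change Disjoint (Function.update J j S a) (Function.update J j S b)
    rcases eq_or_ne a j with rfl | haj
    · simpa [hab.symm] using hSJ b hab.symm
    rcases eq_or_ne b j with rfl | hbj
    · simpa [hab] using (hSJ a hab).symm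
    simpa [haj, hbj] using hJ.pairwise_disjoint hab

def Exchange (M : Matroid α) (J : ι → Set α) (x y : α) : Prop :=
  ∃ i, y ∈ J i ∧ x ∉ J i ∧ M.Indep (insert x (J i \ {y}))

inductive AugPath (M : Matroid α) (J : ι → Set α) : α → ℕ → Prop
  | sink {x : α} (i : ι) : x ∉ J i → M.Indep (insert x (J i)) → M.AugPath J x 0
  | exchange {x y : α} {n : ℕ} : M.Exchange J x y → M.AugPath J y n → M.AugPath J x (n + 1)

/-- Swapping `e` for `y` in `J j`, the first step of a shortest augmenting path from `e`, keeps all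
augmenting paths of length at most `m`: every exchange the swap could invalidate would give a
path from `e` shorter than `m + 1`. -/
lemma AugPath.update_exchange [DecidableEq ι] {j : ι} {m n : ℕ} (hyj : y ∈ J j)
    (hej : e ∉ J j) (hswap : M.Indep (insert e (J j \ {y})))
    (hmin : ∀ k ≤ m, ¬ M.AugPath J e k) (hx : M.AugPath J x n) (hn : n ≤ m) :
    M.AugPath (Function.update J j (insert e (J j \ {y}))) x n := by
  have heE : e ∈ M.E := hswap.subset_ground (mem_insert e _)
  have he_closure {T : Set α} (hT : M.Indep T) (heT : e ∉ T) (h : ¬ M.Indep (insert e T)) :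
      e ∈ M.closure T :=
    by_contra fun h' => h ((hT.insert_indep_iff_of_notMem heT).2 ⟨heE, h'⟩)
  have he' : e ∉ M.closure (J j \ {y}) :=
    (((hswap.subset (subset_insert _ _)).insert_indep_iff_of_notMem fun h => hej h.1).1 hswap).2
  induction hx with
  | @sink x i hxi hins =>
    have hxe : x ≠ e := by rintro rfl; exact hmin 0 (Nat.zero_le m) (.sink i hxi hins)
    rcases eq_or_ne i j with rfl | hij
    · refine .sink i (by simp [hxe, hxi]) ?_
      rw [Function.update_self]
      refine hins.insert_indep_of_exchange hxi hxe hyj ?_ he'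
      exact he_closure (hins.subset (subset_insert _ _)) hej
        fun h => hmin 0 (Nat.zero_le m) (.sink i hej h)
    · exact .sink i (by simpa [hij] using hxi) (by simpa [hij] using hins)
  | @exchange x y' n hxy' hpath ih =>
    obtain ⟨i, hy'i, hxi, hins⟩ := hxy'
    have hxe : x ≠ e := by
      rintro rfl; exact hmin (n + 1) hn (.exchange ⟨i, hy'i, hxi, hins⟩ hpath)
    refine .exchange ⟨i, ?_⟩ (ih (by omega))
    rcases eq_or_ne i j with rfl | hij
    · have hy'y : y' ≠ y := by
        rintro rfl; exact hmin (n + 1) hn (.exchange ⟨i, hyj, hej, hswap⟩ hpath)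
      have hey' : e ≠ y' := fun h => hej (h ▸ hy'i)
      simp only [Function.update_self]
      refine ⟨.inr ⟨hy'i, hy'y⟩, by simp [hxe, hxi], ?_⟩
      rw [← insert_sdiff_singleton_comm hey', sdiff_sdiff_comm]
      refine hins.insert_indep_of_exchange (fun h => hxi h.1) hxe ⟨hyj, hy'y.symm⟩ ?_
        fun h => he' (M.closure_subset_closure (sdiff_subset_sdiff_left sdiff_subset) h)
      exact he_closure (hins.subset (subset_insert _ _)) (fun h => hej h.1)
        fun h => hmin (n + 1) hn (.exchange ⟨i, hy'i, hej, h⟩ hpath)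
    · simpa [hij] using And.intro hy'i (And.intro hxi hins)

lemma IsPacking.exists_insert_of_augPath {n : ℕ} (hJ : M.IsPacking J) (he : e ∉ ⋃ i, J i)
    (hP : M.AugPath J e n) :
    ∃ J' : ι → Set α, M.IsPacking J' ∧ ⋃ i, J' i = insert e (⋃ i, J i) := by
  classical
  induction n using Nat.strong_induction_on generalizing J e with
  | _ n ih =>
  by_cases hshort : ∃ k < n, M.AugPath J e k
  · obtain ⟨k, hk, hPk⟩ := hshort
    exact ih k hk hJ he hPk
  push Not at hshort
  simp only [mem_iUnion, not_exists] at he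
  cases hP with
  | sink j hej hins =>
    refine ⟨_, hJ.update hins fun i hij =>
      disjoint_insert_left.2 ⟨he i, hJ.pairwise_disjoint hij.symm⟩, ?_⟩
    have hJj : J j ⊆ ⋃ i, Function.update J j (insert e (J j)) i :=
      (subset_insert e (J j)).trans (by simpa using subset_iUnion (Function.update J j _) j)
    rw [← union_eq_self_of_subset_right hJj, iUnion_update_union_self, insert_union,
      union_eq_right.2 (subset_iUnion J j)]
  | @exchange _ y m hxy hpath =>
    obtain ⟨j, hyj, -, hswap⟩ := hxy
    set K := Function.update J j (insert e (J j \ {y}))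
    have hK : M.IsPacking K := hJ.update hswap fun i hij =>
      disjoint_insert_left.2 ⟨he i, (hJ.pairwise_disjoint hij.symm).mono_left sdiff_subset⟩
    have hyK : y ∉ ⋃ i, K i := by
      simp only [mem_iUnion, not_exists]
      intro i hyi
      rcases eq_or_ne i j with rfl | hij
      · simp only [K, Function.update_self, mem_insert_iff, mem_sdiff, mem_singleton_iff,
          not_true_eq_false, and_false, or_false] at hyi
        exact he i (hyi ▸ hyj)
      · simp only [K, Function.update_of_ne hij] at hyi
        exact (hJ.pairwise_disjoint hij).ne_of_mem hyi hyj rfl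
    obtain ⟨J', hJ', hJ'K⟩ := ih m (lt_add_one m) hK hyK
      (hpath.update_exchange hyj (he j) hswap (fun k hk => hshort k (by omega)) le_rfl)
    refine ⟨J', hJ', hJ'K.trans ?_⟩
    have hKj : J j \ {y} ⊆ ⋃ i, K i :=
      (subset_insert e _).trans (by simpa [K] using subset_iUnion K j)
    rw [← union_eq_self_of_subset_right hKj, ← union_insert, insert_sdiff_singleton,
      insert_eq_of_mem hyj, iUnion_update_union_self, insert_union,
      union_eq_right.2 (sdiff_subset.trans (subset_iUnion J j))]

def reachableSet (M : Matroid α) (J : ι → Set α) (S : Set α) : Set α :=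
  {x | ∃ e ∈ S, Relation.ReflTransGen (M.Exchange J) e x}

lemma subset_reachableSet : S ⊆ M.reachableSet J S :=
  fun e he => ⟨e, he, .refl⟩

lemma reachableSet_subset : M.reachableSet J S ⊆ S ∪ ⋃ i, J i := by
  rintro x ⟨e, he, hex⟩
  rcases hex.cases_tail with rfl | ⟨c, -, i, hxi, -, -⟩
  exacts [.inl he, .inr (mem_iUnion_of_mem i hxi)]

lemma AugPath.of_reflTransGen {n : ℕ} (hex : Relation.ReflTransGen (M.Exchange J) e x)
    (hx : M.AugPath J x n) : ∃ k, M.AugPath J e k := by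
  induction hex using Relation.ReflTransGen.head_induction_on with
  | refl => exact ⟨n, hx⟩
  | head hec _ ih =>
    obtain ⟨k, hk⟩ := ih
    exact ⟨k + 1, .exchange hec hk⟩

lemma IsPacking.reachableSet_subset_closure (hJ : M.IsPacking J) (hS : S ⊆ M.E)
    (hno : ∀ e ∈ S, ∀ n, ¬ M.AugPath J e n) (i : ι) :
    M.reachableSet J S ⊆ M.closure (J i ∩ M.reachableSet J S) := by
  intro x hxR
  by_cases hxi : x ∈ J i
  · exact M.subset_closure _ (inter_subset_left.trans (hJ.indep i).subset_ground) ⟨hxi, hxR⟩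
  have hxE : x ∈ M.E := (reachableSet_subset.trans (union_subset hS hJ.subset_ground)) hxR
  obtain ⟨e, heS, hex⟩ := hxR
  have hx : x ∈ M.closure (J i) := by
    by_contra hcl
    have hsink : M.AugPath J x 0 :=
      .sink i hxi (((hJ.indep i).insert_indep_iff_of_notMem hxi).2 ⟨hxE, hcl⟩)
    obtain ⟨k, hk⟩ := AugPath.of_reflTransGen hex hsink
    exact hno e heS k hk
  refine M.closure_subset_closure ?_ ((hJ.indep i).mem_closure_setOf_insert_indep hx hxi)
  rintro y ⟨hyi, hy⟩
  exact ⟨hyi, e, heS, hex.tail ⟨i, hyi, hxi, hy⟩⟩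

lemma IsPacking.exists_card_mul_rkSet_add_ncard_le [Fintype ι] [M.Finite]
    (hJ : M.IsPacking J) (hno : ∀ e ∈ M.E \ ⋃ i, J i, ∀ n, ¬ M.AugPath J e n) :
    ∃ R ⊆ M.E, M.E \ ⋃ i, J i ⊆ R ∧
      Fintype.card ι * M.rkSet R + (M.E \ ⋃ i, J i).ncard ≤ R.ncard := by
  set L := M.E \ ⋃ i, J i
  set R := M.reachableSet J L
  have hRE : R ⊆ M.E := reachableSet_subset.trans (union_subset sdiff_subset hJ.subset_ground)
  refine ⟨R, hRE, subset_reachableSet, ?_⟩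
  have hrk (i : ι) : M.rkSet R ≤ (J i ∩ R).ncard :=
    ((hJ.indep i).subset inter_subset_left).rkSet_le_ncard_of_subset_closure
      (hJ.reachableSet_subset_closure sdiff_subset hno i)
  have hsum : Fintype.card ι * M.rkSet R ≤ ∑ i, (J i ∩ R).ncard := by
    simpa using Finset.card_nsmul_le_sum Finset.univ _ _ fun i _ => hrk i
  rw [ncard_eq_ncard_add_sum_ncard_inter (M.ground_finite.subset hRE) hJ.pairwise_disjoint
    subset_reachableSet reachableSet_subset disjoint_sdiff_left]
  omega

lemma IsPacking.exists_isPacking_card_mul_rkSet_add_ncard_le [Fintype ι] [M.Finite]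
    {J₀ : ι → Set α} (hJ₀ : M.IsPacking J₀) :
    ∃ J : ι → Set α, M.IsPacking J ∧ M.E \ ⋃ i, J i ⊆ M.E \ ⋃ i, J₀ i ∧
      ∃ R ⊆ M.E, M.E \ ⋃ i, J i ⊆ R ∧
        Fintype.card ι * M.rkSet R + (M.E \ ⋃ i, J i).ncard ≤ R.ncard := by
  induction h : (M.E \ ⋃ i, J₀ i).ncard using Nat.strong_induction_on generalizing J₀ with
  | _ n ih =>
  by_cases haug : ∃ e ∈ M.E \ ⋃ i, J₀ i, ∃ k, M.AugPath J₀ e k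
  · obtain ⟨e, he, k, hk⟩ := haug
    obtain ⟨J₁, hJ₁, hJ₁J₀⟩ := hJ₀.exists_insert_of_augPath he.2 hk
    have hsub : M.E \ ⋃ i, J₁ i ⊂ M.E \ ⋃ i, J₀ i := by
      rw [hJ₁J₀]
      exact (sdiff_subset_sdiff_right (subset_insert e _)).ssubset_of_not_subset
        fun h' => (h' he).2 (mem_insert e _)
    obtain ⟨J, hJ, hJJ₁, hR⟩ :=
      ih _ (h ▸ ncard_lt_ncard hsub (M.ground_finite.subset sdiff_subset)) hJ₁ rfl
    exact ⟨J, hJ, hJJ₁.trans hsub.subset, hR⟩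
  · push Not at haug
    exact ⟨J₀, hJ₀, subset_rfl, hJ₀.exists_card_mul_rkSet_add_ncard_le haug⟩

lemma exists_isPacking_iUnion_eq_ground [Fintype ι] [M.Finite]
    (h : ∀ X ⊆ M.E, X.ncard ≤ Fintype.card ι * M.rkSet X) :
    ∃ J : ι → Set α, M.IsPacking J ∧ ⋃ i, J i = M.E := by
  have hempty : M.IsPacking (fun _ : ι => (∅ : Set α)) :=
    ⟨fun _ => M.empty_indep, fun _ _ _ => disjoint_bot_left⟩
  obtain ⟨J, hJ, -, R, hRE, -, hR⟩ := hempty.exists_isPacking_card_mul_rkSet_add_ncard_le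
  have hL : (M.E \ ⋃ i, J i).ncard = 0 := by linarith [h R hRE]
  rw [ncard_eq_zero (M.ground_finite.subset sdiff_subset), sdiff_eq_empty] at hL
  exact ⟨J, hJ, hJ.subset_ground.antisymm hL⟩

lemma IsPacking.cons {n : ℕ} {J : Fin n → Set α} (hJ : M.IsPacking J) (hL : M.Indep L)
    (hLJ : Disjoint L (⋃ i, J i)) : M.IsPacking (Fin.cons L J : Fin (n + 1) → Set α) := by
  refine ⟨Fin.cases hL hJ.indep, fun a b hab => ?_⟩
  induction a using Fin.cases <;> induction b using Fin.cases
  · exact absurd rfl hab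
  · exact hLJ.mono_right (subset_iUnion J _)
  · exact (hLJ.mono_right (subset_iUnion J _)).symm
  · exact hJ.pairwise_disjoint fun h => hab (congrArg Fin.succ h)

lemma ncard_le_succ_mul_rkSet {k : ℕ} {ε : ℚ} (hε1 : ε ≤ 1)
    (hub : ∀ X ⊆ M.E, X.Nonempty → (X.ncard : ℚ) ≤ ((k : ℚ) + ε) * M.rkSet X)
    (hX : X ⊆ M.E) :
    X.ncard ≤ (k + 1) * M.rkSet X := by
  rcases X.eq_empty_or_nonempty with rfl | hne
  · simp
  have h : (X.ncard : ℚ) ≤ ((k : ℚ) + 1) * M.rkSet X :=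
    (hub X hX hne).trans (mul_le_mul_of_nonneg_right (by linarith) (Nat.cast_nonneg _))
  exact_mod_cast h

lemma ncard_le_mul_rank_of_add_ncard_le [M.Finite] {k : ℕ} {ε : ℚ} (hε0 : 0 ≤ ε)
    (hub : ∀ X ⊆ M.E, X.Nonempty → (X.ncard : ℚ) ≤ ((k : ℚ) + ε) * M.rkSet X)
    {R : Set α} (hRE : R ⊆ M.E) (hLR : L ⊆ R) (hR : k * M.rkSet R + L.ncard ≤ R.ncard) :
    (L.ncard : ℚ) ≤ ε * M.rank := by
  rcases L.eq_empty_or_nonempty with rfl | hL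
  · rw [ncard_empty, Nat.cast_zero]
    positivity
  have hRub := hub R hRE (hL.mono hLR)
  have hrk : (M.rkSet R : ℚ) ≤ M.rank := by exact_mod_cast rkSet_mono hRE
  have hcount : (k : ℚ) * M.rkSet R + L.ncard ≤ R.ncard := by exact_mod_cast hR
  linarith [mul_le_mul_of_nonneg_left hrk hε0]

end Matroid

theorem stmt4_general (M : Matroid α) [M.Finite] (k : ℕ) (ε : ℚ) (hε0 : 0 ≤ ε) (hε1 : ε < 1)
    (hub : ∀ X ⊆ M.E, X.Nonempty → (X.ncard : ℚ) ≤ ((k : ℚ) + ε) * M.rkSet X) :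
    ∃ I : Fin (k + 1) → Set α, (∀ i, M.Indep (I i)) ∧
      (Set.univ.PairwiseDisjoint I) ∧ (⋃ i, I i) = M.E ∧
      ∃ i, ((I i).ncard : ℚ) ≤ ε * M.rank := by
  obtain ⟨I₀, hI₀, hI₀E⟩ := Matroid.exists_isPacking_iUnion_eq_ground (ι := Fin (k + 1))
    fun X hX => by simpa using Matroid.ncard_le_succ_mul_rkSet hε1.le hub hX
  have hJ₀ : M.IsPacking (I₀ ∘ Fin.succ) :=
    ⟨fun i => hI₀.indep _, hI₀.pairwise_disjoint.comp_of_injective (Fin.succ_injective _)⟩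
  obtain ⟨J, hJ, hLJ₀, R, hRE, hLR, hR⟩ := hJ₀.exists_isPacking_card_mul_rkSet_add_ncard_le
  have hJ₀I₀ : M.E \ ⋃ i, I₀ (Fin.succ i) ⊆ I₀ 0 := by
    rw [sdiff_subset_iff, ← hI₀E]
    intro x
    simp [Fin.exists_fin_succ, or_comm]
  have hI := hJ.cons ((hI₀.indep 0).subset (hLJ₀.trans hJ₀I₀)) disjoint_sdiff_left
  refine ⟨_, hI.indep, pairwise_univ.2 hI.pairwise_disjoint, by simp [hJ.subset_ground], 0, ?_⟩
  rw [Fin.cons_zero]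
  exact Matroid.ncard_le_mul_rank_of_add_ncard_le hε0 hub hRE hLR (by simpa using hR)

/-- Strengthened matroid partition theorem: if `γ(M) = k + ε` with `0 ≤ ε < 1`, then
`E(M)` partitions into `k + 1` independent sets, one of size at most `ε · r(M)`. -/
theorem stmt4 (M : Matroid α) [M.Finite] (k : ℕ) (ε : ℚ) (hε0 : 0 ≤ ε) (hε1 : ε < 1)
    (hub : ∀ X ⊆ M.E, X.Nonempty → (X.ncard : ℚ) ≤ ((k : ℚ) + ε) * M.rkSet X)
    (hattain : ∃ X ⊆ M.E, X.Nonempty ∧ (X.ncard : ℚ) = ((k : ℚ) + ε) * M.rkSet X) :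
    ∃ I : Fin (k + 1) → Set α, (∀ i, M.Indep (I i)) ∧
      (Set.univ.PairwiseDisjoint I) ∧ (⋃ i, I i) = M.E ∧
      ∃ i, ((I i).ncard : ℚ) ≤ ε * M.rank :=
  stmt4_general M k ε hε0 hε1 hub
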